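/- Fix integers d, h ≥ 1 and a function m : ℤ/dℤ → ℤ with total sum m_tot = ∑_τ m(τ), and suppose gcd(m_tot, h) = 1. Let s : ℕ → ℤ/dℤ × ℤ be any sequence such that for every i, either s(i+1) = f(s(i)) or s(i+1) = f(s(i)) − h. Then the elements s(0), s(1), …, s(d·h − 1) are pairwise distinct. (This is the paper's claim that the elements b₀, …, b_{dh−1} constructed from a small EL-chart are distinct, using that m and h are coprime.) -/

import Mathlib

/-- The shift `x ↦ f(x)` on `ℤ^{(d)} = ℤ/dℤ × ℤ`, sending `(τ, a)` to `(τ+1, a + m(τ+1))`. -/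
def elShift {d : ℕ} (m : ZMod d → ℤ) (x : ZMod d × ℤ) : ZMod d × ℤ :=
  (x.1 + 1, x.2 + m (x.1 + 1))

/-- Translation by `-h` in the `ℤ`-coordinate on `ℤ^{(d)} = ℤ/dℤ × ℤ`. -/
def elSubH {d : ℕ} (h : ℕ) (x : ZMod d × ℤ) : ZMod d × ℤ :=
  (x.1, x.2 - (h : ℤ))

/-
Reduce the `ℤ`-coordinate modulo `h`. Both allowed moves then become the same skew shift
`(τ, a) ↦ (τ + 1, a + m (τ + 1))` on `ZMod d × ZMod h`, so `s` reduced mod `h` is an orbit of that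
map. Its orbits have length `d · ord(m_tot)`: returning to the start forces `d ∣ n`, and `d · t`
steps add `t · m_tot`. As `m_tot` is a unit mod `h`, this length is `d h`, so already the
reductions of `s 0, …, s (d h - 1)` are distinct.
-/

open Finset Function

section SkewShift

variable {d : ℕ} {A : Type*}

def skewShift [Add A] (m : ZMod d → A) (x : ZMod d × A) : ZMod d × A :=
  (x.1 + 1, x.2 + m (x.1 + 1))

theorem sum_range_natCast [NeZero d] [AddCommMonoid A] (g : ZMod d → A) :
    ∑ l ∈ range d, g l = ∑ τ, g τ :=
  sum_nbij' (↑) ZMod.val (by simp) (by simp [ZMod.val_lt])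
    (fun _ hl => ZMod.val_cast_of_lt (mem_range.1 hl)) (fun τ _ => ZMod.natCast_zmod_val τ)
    (fun _ _ => rfl)

theorem sum_range_mul_comp_add [NeZero d] [AddCommMonoid A] (g : ZMod d → A) (c : ZMod d)
    (t : ℕ) : ∑ l ∈ range (d * t), g (c + l) = t • ∑ τ, g τ := by
  induction t with
  | zero => simp
  | succ t ih =>
    have hperiod : ∑ l ∈ range d, g (c + ↑(d * t + l)) = ∑ τ, g τ := by
      simp only [Nat.cast_add, Nat.cast_mul, ZMod.natCast_self, zero_mul, zero_add,
        sum_range_natCast fun τ => g (c + τ)]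
      exact Equiv.sum_comp (Equiv.addLeft c) g
    rw [Nat.mul_succ, sum_range_add, ih, hperiod, succ_nsmul]

theorem skewShift_iterate [AddCommMonoid A] (m : ZMod d → A) (x : ZMod d × A) (n : ℕ) :
    (skewShift m)^[n] x = (x.1 + n, x.2 + ∑ l ∈ range n, m (x.1 + (l + 1))) := by
  induction n with
  | zero => simp
  | succ n ih =>
    rw [iterate_succ_apply', ih, skewShift, sum_range_succ]
    push_cast
    simp only [add_assoc]

theorem skewShift_iterate_mul [NeZero d] [AddCommMonoid A] (m : ZMod d → A) (x : ZMod d × A)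
    (t : ℕ) : (skewShift m)^[d * t] x = (x.1, x.2 + t • ∑ τ, m τ) := by
  have hsum := sum_range_mul_comp_add m (x.1 + 1) t
  simp only [add_right_comm _ (1 : ZMod d), add_assoc] at hsum ⊢
  rw [skewShift_iterate]
  simp [hsum]

theorem dvd_of_isPeriodicPt_skewShift [NeZero d] [AddCancelCommMonoid A] {m : ZMod d → A}
    {x : ZMod d × A} {n : ℕ} (hx : IsPeriodicPt (skewShift m) n x) :
    d * addOrderOf (∑ τ, m τ) ∣ n := by
  have hfst : (n : ZMod d) = 0 := by
    simpa [skewShift_iterate] using congrArg Prod.fst hx.eq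
  obtain ⟨t, rfl⟩ := (ZMod.natCast_eq_zero_iff n d).1 hfst
  have hsnd : t • ∑ τ, m τ = 0 := by
    simpa [skewShift_iterate_mul] using congrArg Prod.snd hx.eq
  exact mul_dvd_mul_left d (addOrderOf_dvd_of_nsmul_eq_zero hsnd)

theorem minimalPeriod_skewShift [NeZero d] [AddCancelCommMonoid A] (m : ZMod d → A)
    (x : ZMod d × A) : minimalPeriod (skewShift m) x = d * addOrderOf (∑ τ, m τ) := by
  refine Nat.dvd_antisymm (IsPeriodicPt.minimalPeriod_dvd ?_)
    (dvd_of_isPeriodicPt_skewShift (isPeriodicPt_minimalPeriod _ x))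
  simp [IsPeriodicPt, IsFixedPt, skewShift_iterate_mul]

end SkewShift

theorem ZMod.addOrderOf_intCast_of_gcd_eq_one {h : ℕ} {a : ℤ} (hcop : Int.gcd a h = 1) :
    addOrderOf (a : ZMod h) = h := by
  refine Nat.dvd_antisymm (addOrderOf_dvd_of_nsmul_eq_zero (by simp)) ?_
  have hdvd : (h : ℤ) ∣ addOrderOf (a : ZMod h) * a := by
    rw [← ZMod.intCast_zmod_eq_zero_iff_dvd]
    simpa using addOrderOf_nsmul_eq_zero (a : ZMod h)
  have hcop' : IsCoprime (h : ℤ) a := by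
    rwa [Int.isCoprime_iff_gcd_eq_one, Int.gcd_comm]
  exact_mod_cast hcop'.dvd_of_dvd_mul_right hdvd

def castMod {d : ℕ} (h : ℕ) (x : ZMod d × ℤ) : ZMod d × ZMod h :=
  (x.1, (x.2 : ZMod h))

section ELChart

variable {d h : ℕ} {m : ZMod d → ℤ}

theorem castMod_elShift (x : ZMod d × ℤ) :
    castMod h (elShift m x) = skewShift (fun τ => (m τ : ZMod h)) (castMod h x) := by
  simp [castMod, elShift, skewShift]

theorem castMod_elSubH (x : ZMod d × ℤ) : castMod h (elSubH h x) = castMod (d := d) h x := by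
  simp [castMod, elSubH]

theorem castMod_eq_iterate_of_elChart_step {s : ℕ → ZMod d × ℤ}
    (hs : ∀ i : ℕ, s (i + 1) = elShift m (s i) ∨ s (i + 1) = elSubH h (elShift m (s i)))
    (n : ℕ) : castMod h (s n) = (skewShift fun τ => (m τ : ZMod h))^[n] (castMod h (s 0)) := by
  induction n with
  | zero => rfl
  | succ n ih =>
    rw [iterate_succ_apply', ← ih, ← castMod_elShift]
    rcases hs n with hstep | hstep <;> simp only [hstep, castMod_elSubH]

end ELChart

theorem elChart_sequence_injOn_general
    (d h : ℕ) [NeZero d] (m : ZMod d → ℤ)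
    (hcop : Int.gcd (∑ τ : ZMod d, m τ) (h : ℤ) = 1)
    (s : ℕ → ZMod d × ℤ)
    (hs : ∀ i : ℕ, s (i + 1) = elShift m (s i) ∨ s (i + 1) = elSubH h (elShift m (s i))) :
    ∀ i j : ℕ, i < d * h → j < d * h → s i = s j → i = j := by
  intro i j hi hj hij
  have hord : addOrderOf (∑ τ, (m τ : ZMod h)) = h := by
    rw [← Int.cast_sum]
    exact ZMod.addOrderOf_intCast_of_gcd_eq_one hcop
  have hinj := iterate_injOn_Iio_minimalPeriod (f := skewShift fun τ => (m τ : ZMod h))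
    (x := castMod h (s 0))
  rw [minimalPeriod_skewShift, hord] at hinj
  exact hinj hi hj (by simp only [← castMod_eq_iterate_of_elChart_step hs, hij])

/-- Fix `d, h ≥ 1` and `m : ℤ/dℤ → ℤ` with `gcd(∑ m(τ), h) = 1`. If `s : ℕ → ℤ/dℤ × ℤ`
is a sequence with `s (i+1) = f (s i)` or `s (i+1) = f (s i) - h` for all `i`, then the
elements `s 0, s 1, …, s (d·h - 1)` are pairwise distinct. -/
theorem elChart_sequence_injOn
    (d h : ℕ) [NeZero d] (hh : 1 ≤ h) (m : ZMod d → ℤ)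
    (hcop : Int.gcd (∑ τ : ZMod d, m τ) (h : ℤ) = 1)
    (s : ℕ → ZMod d × ℤ)
    (hs : ∀ i : ℕ, s (i + 1) = elShift m (s i) ∨ s (i + 1) = elSubH h (elShift m (s i))) :
    ∀ i j : ℕ, i < d * h → j < d * h → s i = s j → i = j :=
  elChart_sequence_injOn_general d h m hcop s hs
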